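/- Let p be a prime, f ∈ ℤ[x,y] a polynomial with integer coefficients and nonzero constant term, and (r₁,s₁), (r₂,s₂) integer points with p ∣ f(r₁,s₁) and p ∣ f(r₂,s₂). Assume f_x(r₁,s₁)·f_y(r₂,s₂) − f_y(r₁,s₁)·f_x(r₂,s₂) ≢ 0 (mod p). Then there is exactly one pair (k,l) ∈ {0,1,…,p−1}² such that p² ∣ f(r₁+kp, s₁+lp) and p² ∣ f(r₂+kp, s₂+lp). -/

import Mathlib

/-!
By first-order Taylor expansion, `f (x + p h) ≡ f x + p ∑ hᵢ ∂ᵢf(x) [mod p²]`. Writing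
`f(rᵢ, sᵢ) = p cᵢ`, the two conditions `p² ∣ f(rᵢ + k p, sᵢ + l p)` thus become the linear system
`cᵢ + k ∂ₓf(rᵢ, sᵢ) + l ∂ᵧf(rᵢ, sᵢ) = 0` over `ZMod p`, whose determinant is nonzero by hypothesis;
its unique solution corresponds to a unique `(k, l) ∈ {0, …, p - 1}²`.
-/

open MvPolynomial Finset

theorem sq_dvd_eval_add_smul_sub {R σ : Type*} [CommRing R] [Fintype σ] (p : R)
    (f : MvPolynomial σ R) (x h : σ → R) :
    p ^ 2 ∣ eval (x + p • h) f - eval x f - p * ∑ i, h i * eval x (pderiv i f) := by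
  classical
  induction f using MvPolynomial.induction_on with
  | C c => simp
  | add f g hf hg =>
    convert dvd_add hf hg using 1
    simp only [map_add, mul_add, sum_add_distrib]
    ring
  | mul_X f i hf =>
    obtain ⟨c, hc⟩ := hf
    have hsum : ∑ j, h j * eval x (pderiv j (f * X i))
        = x i * ∑ j, h j * eval x (pderiv j f) + h i * eval x f := by
      simp [pderiv_X, Pi.single_apply, apply_ite (eval x), mul_add, sum_add_distrib, mul_sum,
        mul_left_comm, add_comm]
    refine ⟨x i * c + h i * (∑ j, h j * eval x (pderiv j f) + p * c), ?_⟩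
    simp only [eval_mul, eval_X, hsum, Pi.add_apply, Pi.smul_apply, smul_eq_mul]
    linear_combination (x i + p * h i) * hc

theorem sq_dvd_eval_add_smul_iff {R σ : Type*} [CommRing R] [IsDomain R] [Fintype σ] {p : R}
    (hp : p ≠ 0) {f : MvPolynomial σ R} {x : σ → R} {c : R} (hc : eval x f = p * c) (h : σ → R) :
    p ^ 2 ∣ eval (x + p • h) f ↔ p ∣ c + ∑ i, h i * eval x (pderiv i f) := by
  obtain ⟨t, ht⟩ := sq_dvd_eval_add_smul_sub p f x h
  have hexpand : eval (x + p • h) f = p ^ 2 * t + p * (c + ∑ i, h i * eval x (pderiv i f)) := by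
    linear_combination ht + hc
  rw [hexpand, dvd_add_right (dvd_mul_right _ _), sq, mul_dvd_mul_iff_left hp]

theorem sq_dvd_eval_add_mul_iff {p : ℤ} (hp : p ≠ 0) {f : MvPolynomial (Fin 2) ℤ} {r s c : ℤ}
    (hc : eval ![r, s] f = p * c) (k l : ℤ) :
    p ^ 2 ∣ eval ![r + k * p, s + l * p] f ↔
      p ∣ c + k * eval ![r, s] (pderiv 0 f) + l * eval ![r, s] (pderiv 1 f) := by
  have hpt : ![r + k * p, s + l * p] = ![r, s] + p • ![k, l] := by
    ext i; fin_cases i <;> simp [mul_comm]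
  rw [hpt, sq_dvd_eval_add_smul_iff hp hc, Fin.sum_univ_two, add_assoc]
  rfl

theorem existsUnique_linear_two {K : Type*} [Field K] {a₁ b₁ c₁ a₂ b₂ c₂ : K}
    (hD : a₁ * b₂ - b₁ * a₂ ≠ 0) :
    ∃! uv : K × K, c₁ + uv.1 * a₁ + uv.2 * b₁ = 0 ∧ c₂ + uv.1 * a₂ + uv.2 * b₂ = 0 := by
  refine ⟨((b₁ * c₂ - b₂ * c₁) / (a₁ * b₂ - b₁ * a₂), (a₂ * c₁ - a₁ * c₂) / (a₁ * b₂ - b₁ * a₂)),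
    ⟨?_, ?_⟩, ?_⟩
  · linear_combination (-c₁) * div_self hD
  · linear_combination (-c₂) * div_self hD
  · rintro ⟨u, v⟩ ⟨e₁, e₂⟩
    ext
    · rw [eq_div_iff hD]; linear_combination b₂ * e₁ - b₁ * e₂
    · rw [eq_div_iff hD]; linear_combination a₁ * e₂ - a₂ * e₁

theorem existsUnique_mem_range_prod_of_existsUnique_zmod {p : ℕ} [NeZero p]
    {P : ZMod p × ZMod p → Prop} (h : ∃! uv, P uv) :
    ∃! kl : ℕ × ℕ, kl ∈ range p ×ˢ range p ∧ P ((kl.1 : ZMod p), (kl.2 : ZMod p)) := by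
  obtain ⟨⟨u, v⟩, hP, huniq⟩ := h
  refine ⟨(u.val, v.val), ⟨by simp [ZMod.val_lt], by simpa using hP⟩, ?_⟩
  rintro ⟨k, l⟩ ⟨hmem, hkl⟩
  rw [mem_product, mem_range, mem_range] at hmem
  obtain ⟨rfl, rfl⟩ := Prod.mk.inj (huniq _ hkl)
  simp [ZMod.val_cast_of_lt hmem.1, ZMod.val_cast_of_lt hmem.2]

theorem stmt_5_general (p : ℕ) (hp : p.Prime) (f : MvPolynomial (Fin 2) ℤ)
    (r₁ s₁ r₂ s₂ : ℤ)
    (h₁ : (p : ℤ) ∣ MvPolynomial.eval ![r₁, s₁] f)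
    (h₂ : (p : ℤ) ∣ MvPolynomial.eval ![r₂, s₂] f)
    (hdet : ¬ (p : ℤ) ∣
      (MvPolynomial.eval ![r₁, s₁] (MvPolynomial.pderiv 0 f) *
        MvPolynomial.eval ![r₂, s₂] (MvPolynomial.pderiv 1 f) -
       MvPolynomial.eval ![r₁, s₁] (MvPolynomial.pderiv 1 f) *
        MvPolynomial.eval ![r₂, s₂] (MvPolynomial.pderiv 0 f))) :
    ∃! kl : ℕ × ℕ, kl ∈ Finset.range p ×ˢ Finset.range p ∧
      ((p : ℤ) ^ 2 ∣ MvPolynomial.eval ![r₁ + (kl.1 : ℤ) * p, s₁ + (kl.2 : ℤ) * p] f) ∧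
      ((p : ℤ) ^ 2 ∣ MvPolynomial.eval ![r₂ + (kl.1 : ℤ) * p, s₂ + (kl.2 : ℤ) * p] f) := by
  have := Fact.mk hp
  have hp0 : (p : ℤ) ≠ 0 := by exact_mod_cast hp.ne_zero
  have key : ∀ {r s c : ℤ}, eval ![r, s] f = p * c → ∀ k l : ℕ,
      ((p : ℤ) ^ 2 ∣ eval ![r + (k : ℤ) * p, s + (l : ℤ) * p] f ↔
        (c : ZMod p) + k * (eval ![r, s] (pderiv 0 f) : ZMod p)
          + l * (eval ![r, s] (pderiv 1 f) : ZMod p) = 0) := by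
    intro r s c hc k l
    rw [sq_dvd_eval_add_mul_iff hp0 hc, ← ZMod.intCast_zmod_eq_zero_iff_dvd]
    push_cast
    rfl
  obtain ⟨c₁, hc₁⟩ := h₁
  obtain ⟨c₂, hc₂⟩ := h₂
  rw [← ZMod.intCast_zmod_eq_zero_iff_dvd] at hdet
  push_cast at hdet
  simp only [key hc₁, key hc₂]
  exact existsUnique_mem_range_prod_of_existsUnique_zmod (existsUnique_linear_two hdet)

theorem stmt_5 (p : ℕ) (hp : p.Prime) (f : MvPolynomial (Fin 2) ℤ)
    (hconst : MvPolynomial.coeff 0 f ≠ 0) (r₁ s₁ r₂ s₂ : ℤ)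
    (h₁ : (p : ℤ) ∣ MvPolynomial.eval ![r₁, s₁] f)
    (h₂ : (p : ℤ) ∣ MvPolynomial.eval ![r₂, s₂] f)
    (hdet : ¬ (p : ℤ) ∣
      (MvPolynomial.eval ![r₁, s₁] (MvPolynomial.pderiv 0 f) *
        MvPolynomial.eval ![r₂, s₂] (MvPolynomial.pderiv 1 f) -
       MvPolynomial.eval ![r₁, s₁] (MvPolynomial.pderiv 1 f) *
        MvPolynomial.eval ![r₂, s₂] (MvPolynomial.pderiv 0 f))) :
    ∃! kl : ℕ × ℕ, kl ∈ Finset.range p ×ˢ Finset.range p ∧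
      ((p : ℤ) ^ 2 ∣ MvPolynomial.eval ![r₁ + (kl.1 : ℤ) * p, s₁ + (kl.2 : ℤ) * p] f) ∧
      ((p : ℤ) ^ 2 ∣ MvPolynomial.eval ![r₂ + (kl.1 : ℤ) * p, s₂ + (kl.2 : ℤ) * p] f) :=
  stmt_5_general p hp f r₁ s₁ r₂ s₂ h₁ h₂ hdet
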